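/- arXiv:1801.07765 — 2 statements merged into one kernel-verified Lean document; each statement's English description precedes it below -/
import Mathlib

section
/- Let P be a strictly positive probability distribution on {0,1}^B satisfying P(x) = ∏_{j=1}^k P_{C_j}(x_{C_j}) for a partition {C_1,...,C_k} of {1,...,B}. Then the coefficients u_C in the expansion log P(x) = u_∅ + Σ_{∅≠C⊆{1,...,B}} u_C ∏_{i∈C} x_i vanish for every nonempty C that is not contained in any block C_j. -/
/-!
Evaluating the expansion at the indicator vector of `S` gives
`log P(1_S) = ∑_{T ⊆ S} u_T`, so Möbius inversion recovers `u_C` as the alternating sum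
`∑_{S ⊆ C} (-1)^{|C \ S|} log P(1_S)`. By factorization, `log P(1_S)` is a sum over blocks `j`
of functions of `S ∩ j` only. For each block pick `i ∈ C \ j`: the alternating sum of a function
that does not see `i` vanishes, since the terms for `S` and `insert i S` cancel.
-/

open Finset

/-- Marginal of a real-valued table `P` over coordinates in `C`. -/
noncomputable def marg {B : ℕ} (P : (Fin B → Bool) → ℝ) (C : Finset (Fin B))
    (x : Fin B → Bool) : ℝ :=
  ∑ z : Fin B → Bool, if ∀ i ∈ C, z i = x i then P z else 0

/-- Marginal count table of a contingency table `n` over coordinates in `C`. -/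
def margN {B : ℕ} (n : (Fin B → Bool) → ℕ) (C : Finset (Fin B))
    (x : Fin B → Bool) : ℕ :=
  ∑ z : Fin B → Bool, if ∀ i ∈ C, z i = x i then n z else 0

namespace Finset

section SubsetAltSum

variable {α R : Type*} [DecidableEq α] [CommRing R]

/-- The Möbius transform on the subset lattice below `C`. -/
def subsetAltSum (C : Finset α) (f : Finset α → R) : R :=
  ∑ S ∈ C.powerset, (-1) ^ (C \ S).card * f S

theorem subsetAltSum_sum {ι : Type*} (C : Finset α) (s : Finset ι) (f : ι → Finset α → R) :
    subsetAltSum C (fun S => ∑ t ∈ s, f t S) = ∑ t ∈ s, subsetAltSum C (f t) := by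
  simp only [subsetAltSum, mul_sum]
  exact sum_comm

theorem subsetAltSum_const_mul (C : Finset α) (a : R) (f : Finset α → R) :
    subsetAltSum C (fun S => a * f S) = a * subsetAltSum C f := by
  simp only [subsetAltSum, mul_sum]
  exact sum_congr rfl fun S _ => mul_left_comm _ _ _

theorem subsetAltSum_eq_zero_of_insert_eq {C : Finset α} {f : Finset α → R} {i : α}
    (hi : i ∈ C) (hf : ∀ S, f (insert i S) = f S) : subsetAltSum C f = 0 := by
  have hi' : i ∉ C.erase i := notMem_erase i C
  rw [subsetAltSum, ← insert_erase hi, sum_powerset_insert hi', ← sum_add_distrib]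
  refine sum_eq_zero fun S hS => ?_
  have hiS : i ∉ S := fun h => hi' (mem_powerset.mp hS h)
  rw [insert_sdiff_of_notMem _ hiS, card_insert_of_notMem fun h => hi' (mem_sdiff.mp h).1,
    insert_sdiff_insert, sdiff_insert_of_notMem hi', hf, pow_succ]
  ring

theorem subsetAltSum_indicator_subset (C T : Finset α) :
    subsetAltSum C (fun S => if T ⊆ S then (1 : R) else 0) = if T = C then 1 else 0 := by
  by_cases hTC : T ⊆ C
  · rcases eq_or_ssubset_of_subset hTC with rfl | hssub
    · rw [if_pos rfl, subsetAltSum, sum_eq_single_of_mem T (mem_powerset_self T)]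
      · simp
      · intro S hS hST
        rw [if_neg fun h => hST (subset_antisymm (mem_powerset.mp hS) h), mul_zero]
    · obtain ⟨i, hiC, hiT⟩ := exists_of_ssubset hssub
      rw [if_neg hssub.ne]
      exact subsetAltSum_eq_zero_of_insert_eq hiC fun S => by
        simp only [subset_insert_iff_of_notMem hiT]
  · rw [if_neg fun h : T = C => hTC h.subset, subsetAltSum]
    refine sum_eq_zero fun S hS => ?_
    rw [if_neg fun h => hTC (h.trans (mem_powerset.mp hS)), mul_zero]

theorem subsetAltSum_sum_indicator_subset [Fintype α] (C : Finset α) (u : Finset α → R) :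
    subsetAltSum C (fun S => ∑ T, u T * if T ⊆ S then 1 else 0) = u C := by
  simp_rw [subsetAltSum_sum, subsetAltSum_const_mul, subsetAltSum_indicator_subset, mul_ite,
    mul_one, mul_zero]
  simp

end SubsetAltSum

end Finset

theorem marg_congr {B : ℕ} (P : (Fin B → Bool) → ℝ) (C : Finset (Fin B))
    {x y : Fin B → Bool} (h : ∀ i ∈ C, x i = y i) : marg P C x = marg P C y :=
  sum_congr rfl fun z _ => if_congr (forall₂_congr fun i hi => by rw [h i hi]) rfl rfl

theorem factorization_kills_cross_terms_general {B : ℕ}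
    (π : Finpartition (Finset.univ : Finset (Fin B)))
    (P : (Fin B → Bool) → ℝ) (hpos : ∀ x, 0 < P x)
    (hfact : ∀ x, P x = ∏ j ∈ π.parts, marg P j x)
    (u : Finset (Fin B) → ℝ)
    (hexp : ∀ x, Real.log (P x) =
      ∑ C : Finset (Fin B), u C * ∏ i ∈ C, (if x i then (1:ℝ) else 0)) :
    ∀ C : Finset (Fin B), C.Nonempty → (∀ j ∈ π.parts, ¬ C ⊆ j) → u C = 0 := by
  intro C _ hcross
  let ind : Finset (Fin B) → Fin B → Bool := fun S i => decide (i ∈ S)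
  have hlog_expand : ∀ S, Real.log (P (ind S)) = ∑ T, u T * if T ⊆ S then 1 else 0 := by
    intro S
    simp [hexp, ind, prod_boole, subset_iff]
  have hlog_factor : ∀ S, Real.log (P (ind S)) = ∑ j ∈ π.parts, Real.log (marg P j (ind S)) := by
    intro S
    rw [hfact, Real.log_prod]
    exact prod_ne_zero_iff.mp (hfact (ind S) ▸ (hpos (ind S)).ne')
  calc u C = subsetAltSum C (fun S => Real.log (P (ind S))) := by
        simp only [hlog_expand, subsetAltSum_sum_indicator_subset]
    _ = ∑ j ∈ π.parts, subsetAltSum C (fun S => Real.log (marg P j (ind S))) := by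
        simp only [hlog_factor, subsetAltSum_sum]
    _ = 0 := sum_eq_zero fun j hj => by
        obtain ⟨i, hiC, hij⟩ := not_subset.mp (hcross j hj)
        refine subsetAltSum_eq_zero_of_insert_eq hiC fun S => ?_
        refine congrArg Real.log (marg_congr P j fun k hk => ?_)
        simp [ind, ne_of_mem_of_not_mem hk hij]

/-- If a strictly positive distribution factorizes along the blocks of a
partition, then all cross-block interaction coefficients in its log-expansion
vanish. -/
theorem factorization_kills_cross_terms {B : ℕ}
    (π : Finpartition (Finset.univ : Finset (Fin B)))
    (P : (Fin B → Bool) → ℝ) (hpos : ∀ x, 0 < P x) (hsum : ∑ x, P x = 1)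
    (hfact : ∀ x, P x = ∏ j ∈ π.parts, marg P j x)
    (u : Finset (Fin B) → ℝ)
    (hexp : ∀ x, Real.log (P x) =
      ∑ C : Finset (Fin B), u C * ∏ i ∈ C, (if x i then (1:ℝ) else 0)) :
    ∀ C : Finset (Fin B), C.Nonempty → (∀ j ∈ π.parts, ¬ C ⊆ j) → u C = 0 :=
  factorization_kills_cross_terms_general π P hpos hfact u hexp
end

section
/- Conversely, let P be a strictly positive distribution on {0,1}^B whose log-expansion coefficients u_C (in the baseline-zero parametrization) vanish for every nonempty C not contained in any block of a partition {C_1,...,C_k} of {1,...,B}. Then the subvectors X_{C_1},...,X_{C_k} are mutually independent under P. -/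
open Finset

/-!
Exponentiating the expansion gives `P = exp (u ∅) * ∏ⱼ fⱼ` with `fⱼ` a function of `x_{Cⱼ}`
alone, because every set with a nonzero coefficient lies inside a single block. Restricting to
the blocks identifies `{0,1}^B` with `∏ⱼ {0,1}^{Cⱼ}`, so sums of such products factor: with
`Zⱼ` the total mass of `fⱼ`, `1 = ∑ P = exp (u ∅) * ∏ⱼ Zⱼ` and
`P_{Cⱼ}(x) = exp (u ∅) * fⱼ(x) * ∏_{k ≠ j} Z_k`. Hence `P_{Cⱼ}(x) * Zⱼ = fⱼ(x)`, and multiplying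
over `j` gives `P x = ∏ⱼ P_{Cⱼ}(x)`.
-/

namespace Finpartition

variable {ι α : Type*} [Fintype ι] [DecidableEq ι] (π : Finpartition (univ : Finset ι))

theorem bijective_restrict_parts :
    Function.Bijective fun (z : ι → α) (j : π.parts) ↦ (j : Finset ι).restrict z := by
  constructor
  · intro z z' h
    funext i
    exact congrFun (congrFun h ⟨π.part i, π.part_mem.2 (mem_univ i)⟩) ⟨i, π.mem_part (mem_univ i)⟩
  · intro w
    refine ⟨fun i ↦ w ⟨π.part i, π.part_mem.2 (mem_univ i)⟩ ⟨i, π.mem_part (mem_univ i)⟩, ?_⟩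
    funext ⟨j, hj⟩ ⟨i, hi⟩
    obtain rfl := π.part_eq_of_mem hj hi
    rfl

theorem sum_prod_restrict_eq_prod_sum {R : Type*} [Fintype α] [CommSemiring R]
    (g : ∀ j : Finset ι, (j → α) → R) :
    ∑ z : ι → α, ∏ j ∈ π.parts, g j (j.restrict z) = ∏ j ∈ π.parts, ∑ y : j → α, g j y := by
  rw [← prod_coe_sort π.parts, Fintype.prod_sum]
  simp_rw [← prod_coe_sort π.parts]
  exact π.bijective_restrict_parts.sum_comp fun w ↦ ∏ j : π.parts, g j (w j)

theorem sum_ite_restrict_eq_mul_prod_sum {R : Type*} [Fintype α] [DecidableEq α]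
    [CommSemiring R] (g : ∀ j : Finset ι, (j → α) → R) {j : Finset ι} (hj : j ∈ π.parts)
    (x : ι → α) :
    ∑ z : ι → α, (if j.restrict z = j.restrict x then ∏ k ∈ π.parts, g k (k.restrict z) else 0) =
      g j (j.restrict x) * ∏ k ∈ π.parts.erase j, ∑ y : k → α, g k y := by
  -- the fibre condition only involves block `j`, so it is absorbed into that block's factor
  set g' := Function.update g j fun y ↦ if y = j.restrict x then g j y else 0
  have hg' : ∀ k ∈ π.parts.erase j, g' k = g k :=
    fun k hk ↦ Function.update_of_ne (ne_of_mem_erase hk) _ _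
  have hsummand : ∀ z : ι → α,
      (if j.restrict z = j.restrict x then ∏ k ∈ π.parts, g k (k.restrict z) else 0) =
        ∏ k ∈ π.parts, g' k (k.restrict z) := by
    intro z
    rw [← mul_prod_erase _ _ hj, ← mul_prod_erase _ (fun k ↦ g' k (k.restrict z)) hj,
      prod_congr rfl fun k hk ↦ congrFun (hg' k hk) (k.restrict z)]
    simp only [g', Function.update_self, ite_mul, zero_mul]
  rw [sum_congr rfl fun z _ ↦ hsummand z, sum_prod_restrict_eq_prod_sum, ← mul_prod_erase _ _ hj,
    prod_congr rfl fun k hk ↦ by rw [hg' k hk]]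
  simp [g']

theorem sum_eq_add_sum_sum_powerset_erase_empty {M : Type*} [AddCommMonoid M]
    (v : Finset ι → M) (hv : ∀ C : Finset ι, C.Nonempty → (∀ j ∈ π.parts, ¬ C ⊆ j) → v C = 0) :
    ∑ C, v C = v ∅ + ∑ j ∈ π.parts, ∑ C ∈ j.powerset.erase ∅, v C := by
  have hdisj : (π.parts : Set (Finset ι)).PairwiseDisjoint (fun j ↦ j.powerset.erase ∅) := by
    intro j hj k hk hjk
    refine disjoint_left.2 fun C hCj hCk ↦ ?_
    rw [mem_erase, mem_powerset] at hCj hCk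
    obtain ⟨i, hi⟩ := nonempty_iff_ne_empty.2 hCj.1
    exact disjoint_left.1 (π.disjoint hj hk hjk) (hCj.2 hi) (hCk.2 hi)
  have hempty : ∅ ∉ π.parts.biUnion fun j ↦ j.powerset.erase ∅ := by simp
  rw [← sum_biUnion hdisj, ← sum_insert hempty]
  refine (sum_subset (subset_univ _) fun C _ hC ↦ hv C ?_ fun j hj hCj ↦ hC ?_).symm
  · exact nonempty_iff_ne_empty.2 fun h ↦ hC (h ▸ mem_insert_self _ _)
  · rw [mem_insert, mem_biUnion]
    exact (em (C = ∅)).imp id fun hCe ↦ ⟨j, hj, mem_erase.2 ⟨hCe, mem_powerset.2 hCj⟩⟩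

end Finpartition

theorem marg_eq_mul_prod_erase {B : ℕ} (π : Finpartition (univ : Finset (Fin B)))
    {P : (Fin B → Bool) → ℝ} {c : ℝ} {g : ∀ j : Finset (Fin B), (j → Bool) → ℝ}
    (hP : ∀ z, P z = c * ∏ j ∈ π.parts, g j (j.restrict z)) {j : Finset (Fin B)}
    (hj : j ∈ π.parts) (x : Fin B → Bool) :
    marg P j x = c * g j (j.restrict x) * ∏ k ∈ π.parts.erase j, ∑ y : k → Bool, g k y := by
  have hfiber : ∀ z : Fin B → Bool, (∀ i ∈ j, z i = x i) ↔ j.restrict z = j.restrict x := by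
    simp [funext_iff]
  simp_rw [marg, hfiber, hP, ← mul_ite_zero, ← mul_sum, π.sum_ite_restrict_eq_mul_prod_sum g hj,
    mul_assoc]

theorem eq_prod_marg_of_eq_mul_prod_restrict {B : ℕ} (π : Finpartition (univ : Finset (Fin B)))
    {P : (Fin B → Bool) → ℝ} {c : ℝ} {g : ∀ j : Finset (Fin B), (j → Bool) → ℝ}
    (hP : ∀ z, P z = c * ∏ j ∈ π.parts, g j (j.restrict z)) (hsum : ∑ z, P z = 1)
    (x : Fin B → Bool) :
    P x = ∏ j ∈ π.parts, marg P j x := by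
  set Z := fun k : Finset (Fin B) ↦ ∑ y : k → Bool, g k y
  have hnorm : c * ∏ k ∈ π.parts, Z k = 1 := by
    rw [← hsum, ← π.sum_prod_restrict_eq_prod_sum, mul_sum]
    exact sum_congr rfl fun z _ ↦ (hP z).symm
  have hmarg : ∀ j ∈ π.parts, marg P j x * Z j = g j (j.restrict x) := by
    intro j hj
    calc marg P j x * Z j
        = g j (j.restrict x) * (c * (Z j * ∏ k ∈ π.parts.erase j, Z k)) := by
          rw [marg_eq_mul_prod_erase π hP hj]; ring
      _ = g j (j.restrict x) := by rw [mul_prod_erase _ _ hj, hnorm, mul_one]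
  calc P x = c * ∏ j ∈ π.parts, (marg P j x * Z j) := by rw [hP, prod_congr rfl hmarg]
    _ = (c * ∏ j ∈ π.parts, Z j) * ∏ j ∈ π.parts, marg P j x := by rw [prod_mul_distrib]; ring
    _ = ∏ j ∈ π.parts, marg P j x := by rw [hnorm, one_mul]

/-- Conversely, if all cross-block interaction coefficients vanish, the block
subvectors are mutually independent. -/
theorem cross_terms_zero_implies_independence {B : ℕ}
    (π : Finpartition (Finset.univ : Finset (Fin B)))
    (P : (Fin B → Bool) → ℝ) (hpos : ∀ x, 0 < P x) (hsum : ∑ x, P x = 1)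
    (u : Finset (Fin B) → ℝ)
    (hexp : ∀ x, Real.log (P x) =
      ∑ C : Finset (Fin B), u C * ∏ i ∈ C, (if x i then (1:ℝ) else 0))
    (hvanish : ∀ C : Finset (Fin B), C.Nonempty →
      (∀ j ∈ π.parts, ¬ C ⊆ j) → u C = 0) :
    ∀ x, P x = ∏ j ∈ π.parts, marg P j x := by
  intro x
  set f : Finset (Fin B) → (Fin B → Bool) → ℝ := fun j z ↦
    Real.exp (∑ C ∈ j.powerset.erase ∅, u C * ∏ i ∈ C, if z i then 1 else 0)
  have hdep : ∀ j, DependsOn (f j) j := by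
    intro j z z' h
    refine congrArg Real.exp (sum_congr rfl fun C hC ↦ ?_)
    have hCj := mem_powerset.1 (mem_of_mem_erase hC)
    exact congrArg _ (prod_congr rfl fun i hi ↦ by rw [h i (hCj hi)])
  choose g hg using fun j ↦ dependsOn_iff_exists_comp.1 (hdep j)
  have hP : ∀ z, P z = Real.exp (u ∅) * ∏ j ∈ π.parts, g j (j.restrict z) := by
    intro z
    rw [← Real.exp_log (hpos z), hexp, π.sum_eq_add_sum_sum_powerset_erase_empty _
      fun C hC hCπ ↦ by rw [hvanish C hC hCπ, zero_mul], prod_empty, mul_one, Real.exp_add,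
      Real.exp_sum]
    exact congrArg (Real.exp (u ∅) * ·) (prod_congr rfl fun j _ ↦ congrFun (hg j) z)
  exact eq_prod_marg_of_eq_mul_prod_restrict π hP hsum x
end
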